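/- For every natural number n, parameters u_ℓ = (θ_ℓ, φ_ℓ, λ_ℓ) ∈ ℝ³ for ℓ = 0,…,n−1, and all n-bit strings J' and J, the coin-marginal transition probability of two walk evolutions satisfies ∑_{k ∈ ZMod 2} ‖(U²)_{(k,J'),(0,J)}‖² = ∑_{k ∈ ZMod 2} | ∑_{I : I_{n−1} = k} f(I, J' ⊕ J ⊕ I) |², where the inner sum is over all n-bit strings I whose (n−1)-th bit equals k, and f(I,K) := (∏_{ℓ=0}^{n−1} [U3(u_ℓ)]_{I_ℓ, I_{ℓ−1}}) · (∏_{ℓ=0}^{n−1} [U3(u_ℓ)]_{K_ℓ, K_{ℓ−1}}) with the conventions I_{−1} = K_{n−1} and K_{−1} = 0. -/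

import Mathlib

/-- The single-qubit rotation gate `U3(θ,φ,λ)`, indexed by `ZMod 2`. -/
noncomputable def U3 (θ φ lam : ℝ) : Matrix (ZMod 2) (ZMod 2) ℂ :=
  Matrix.of fun μ ν =>
    if μ = 0 then
      (if ν = 0 then (Real.cos (θ / 2) : ℂ)
       else -Complex.exp (Complex.I * lam) * (Real.sin (θ / 2) : ℂ))
    else
      (if ν = 0 then Complex.exp (Complex.I * φ) * (Real.sin (θ / 2) : ℂ)
       else Complex.exp (Complex.I * (lam + φ)) * (Real.cos (θ / 2) : ℂ))

/-- Coin rotation: `U3` acting on the coin qubit, identity on the graph qubits. -/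
noncomputable def coinR (n : ℕ) (u : ℝ × ℝ × ℝ) :
    Matrix (ZMod 2 × (Fin n → ZMod 2)) (ZMod 2 × (Fin n → ZMod 2)) ℂ :=
  Matrix.of fun p q => if p.2 = q.2 then U3 u.1 u.2.1 u.2.2 p.1 q.1 else 0

/-- Controlled flip of the `k`-th graph qubit, controlled by the coin qubit. -/
def flipC (n : ℕ) (k : Fin n) :
    Matrix (ZMod 2 × (Fin n → ZMod 2)) (ZMod 2 × (Fin n → ZMod 2)) ℂ :=
  Matrix.of fun p q =>
    if p.1 = q.1 ∧ p.2 = q.2 + q.1 • (Pi.single k 1 : Fin n → ZMod 2) then 1 else 0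

/-- One quantum-walk evolution `U = W_{n-1} ⋯ W_1 W_0`, where `W_k = C_k · R_k`. -/
noncomputable def walkU (n : ℕ) (u : Fin n → ℝ × ℝ × ℝ) :
    Matrix (ZMod 2 × (Fin n → ZMod 2)) (ZMod 2 × (Fin n → ZMod 2)) ℂ :=
  ((List.finRange n).reverse.map (fun k => flipC n k * coinR n (u k))).prod

/-- The bit `K_{ℓ-1}` of an `n`-bit string, with a prescribed value `d` for `K_{-1}`. -/
def prevBitD (n : ℕ) (K : Fin n → ZMod 2) (d : ZMod 2) (ℓ : Fin n) : ZMod 2 :=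
  if 0 < (ℓ : ℕ) then K ⟨(ℓ : ℕ) - 1, lt_of_le_of_lt (Nat.sub_le _ _) ℓ.isLt⟩ else d

/-- The bit `I_{n-1}` of an `n`-bit string, with the convention `I_{-1} = 0` (for `n = 0`). -/
def lastBit (n : ℕ) (I : Fin n → ZMod 2) : ZMod 2 :=
  if h : 0 < n then I ⟨n - 1, Nat.sub_lt h Nat.one_pos⟩ else 0

/-- The two-evolution amplitude
`f(I,K) = (∏_ℓ [U3(u_ℓ)]_{I_ℓ,I_{ℓ-1}}) (∏_ℓ [U3(u_ℓ)]_{K_ℓ,K_{ℓ-1}})`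
with the conventions `I_{-1} = K_{n-1}` and `K_{-1} = 0`. -/
noncomputable def fTwo (n : ℕ) (u : Fin n → ℝ × ℝ × ℝ) (I K : Fin n → ZMod 2) : ℂ :=
  (∏ ℓ : Fin n,
      U3 (u ℓ).1 (u ℓ).2.1 (u ℓ).2.2 (I ℓ) (prevBitD n I (lastBit n K) ℓ)) *
  (∏ ℓ : Fin n,
      U3 (u ℓ).1 (u ℓ).2.1 (u ℓ).2.2 (K ℓ) (prevBitD n K 0 ℓ))

/-! Reading `W_k = C_k R_k` backwards, the controlled flip leaves the coin value `c_k` produced at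
step `k` recorded in bit `k` of the graph register, so along any nonzero path the flipped string
`K = J' + J` *is* the sequence of coin values. Hence `U_{(c',J'),(c,J)}` vanishes unless
`c' = K_{n-1}`, and otherwise is the single path amplitude `∏_ℓ [U3(u_ℓ)]_{K_ℓ, K_{ℓ-1}}` with
`K_{-1} = c`; this is proved for the prefix products `W_{m-1} ⋯ W_0` by induction on `m`.
Expanding `U² = U · U` over the intermediate state `(c, J' + I)`, the right factor forces
`c = K_{n-1}` for `K = J' + J + I`, the left one forces `k = I_{n-1}`, and the product of the two
path amplitudes is `f(I, K)`. -/

open Finset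

local notation "U3[" v "]" => U3 (v).1 (v).2.1 (v).2.2

section WalkAmplitudes

variable {n : ℕ}

section Steps

variable {ι : Type*} (A : Matrix (ZMod 2 × (Fin n → ZMod 2)) ι ℂ) (c' : ZMod 2)
  (J' : Fin n → ZMod 2) (q : ι)

lemma flipC_mul_apply (k : Fin n) :
    (flipC n k * A) (c', J') q = A (c', J' + c' • Pi.single k 1) q := by
  rw [Matrix.mul_apply, Fintype.sum_eq_single (c', J' + c' • Pi.single k 1)]
  · simp [flipC, add_assoc, ZModModule.add_self]
  · rintro ⟨b, M⟩ hne
    simp only [flipC, Matrix.of_apply, ite_mul, one_mul, zero_mul, ite_eq_right_iff, and_imp]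
    rintro rfl rfl
    simp [add_assoc, ZModModule.add_self] at hne

lemma coinR_mul_apply (v : ℝ × ℝ × ℝ) :
    (coinR n v * A) (c', J') q = ∑ b, U3[v] c' b * A (b, J') q := by
  simp [Matrix.mul_apply, Fintype.sum_prod_type, coinR, ite_mul]

end Steps

section EntryBefore

variable {α : Type*} (K : Fin n → α) (c : α)

/-- `K_{m-1}`, with `c` in the role of `K_{-1}` (and, as a junk value, for `m > n`). -/
def entryBefore (m : ℕ) : α :=
  if h : 0 < m ∧ m ≤ n then K ⟨m - 1, by omega⟩ else c

lemma entryBefore_succ {m : ℕ} (hm : m < n) : entryBefore K c (m + 1) = K ⟨m, hm⟩ := by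
  simp [entryBefore, Nat.succ_le_of_lt hm]

lemma entryBefore_congr {K' : Fin n → α} {m : ℕ} (h : ∀ ℓ : Fin n, ℓ.val < m → K ℓ = K' ℓ) :
    entryBefore K c m = entryBefore K' c m := by
  unfold entryBefore
  split_ifs
  · exact h _ (by simp; omega)
  · rfl

end EntryBefore

lemma prevBitD_eq_entryBefore (K : Fin n → ZMod 2) (c : ZMod 2) (ℓ : Fin n) :
    prevBitD n K c ℓ = entryBefore K c ℓ := by
  have := ℓ.isLt
  unfold prevBitD entryBefore
  split_ifs <;> first | rfl | omega

lemma lastBit_eq_entryBefore (K : Fin n → ZMod 2) : lastBit n K = entryBefore K 0 n := by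
  simp [lastBit, entryBefore]

lemma entryBefore_lastBit (I K : Fin n → ZMod 2) :
    entryBefore I (lastBit n K) n = lastBit n I := by
  rcases n.eq_zero_or_pos with rfl | hn
  · simp [entryBefore, lastBit]
  · simp [entryBefore, lastBit, hn]

lemma forall_ge_add_smul_single_eq_zero_iff {m : ℕ} (hm : m < n) (K : Fin n → ZMod 2)
    (b : ZMod 2) :
    (∀ ℓ : Fin n, m ≤ ℓ.val → (K + b • (Pi.single ⟨m, hm⟩ 1 : Fin n → ZMod 2)) ℓ = 0) ↔
      (∀ ℓ : Fin n, m + 1 ≤ ℓ.val → K ℓ = 0) ∧ b = K ⟨m, hm⟩ := by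
  constructor
  · intro h
    refine ⟨fun ℓ hℓ => ?_, ?_⟩
    · simpa [Pi.single_apply, Fin.ext_iff, show ℓ.val ≠ m by omega] using h ℓ (by omega)
    · have hm := h ⟨m, hm⟩ le_rfl
      rw [Pi.add_apply, ← ZModModule.sub_eq_add, sub_eq_zero] at hm
      simpa using hm.symm
  · rintro ⟨h, rfl⟩ ℓ hℓ
    rcases eq_or_ne ℓ ⟨m, hm⟩ with rfl | hne
    · simp [ZModModule.add_self]
    · have hℓ' : m + 1 ≤ ℓ.val := by
        have : ℓ.val ≠ m := fun e => hne (Fin.ext e)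
        omega
      simp [hne, h ℓ hℓ']

variable (u : Fin n → ℝ × ℝ × ℝ)

noncomputable def pathAmp (K : Fin n → ZMod 2) (c : ZMod 2) (m : ℕ) : ℂ :=
  ∏ ℓ : Fin n with ℓ.val < m, U3[u ℓ] (K ℓ) (entryBefore K c ℓ)

lemma pathAmp_zero (K : Fin n → ZMod 2) (c : ZMod 2) : pathAmp u K c 0 = 1 := by
  simp [pathAmp]

lemma pathAmp_succ (K : Fin n → ZMod 2) (c : ZMod 2) {m : ℕ} (hm : m < n) :
    pathAmp u K c (m + 1) =
      U3[u ⟨m, hm⟩] (K ⟨m, hm⟩) (entryBefore K c m) * pathAmp u K c m := by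
  have hfilter : univ.filter (fun ℓ : Fin n => ℓ.val < m + 1) =
      insert ⟨m, hm⟩ (univ.filter fun ℓ : Fin n => ℓ.val < m) := by
    ext ℓ
    simp only [mem_filter, mem_univ, true_and, mem_insert, Fin.ext_iff]
    omega
  rw [pathAmp, hfilter, prod_insert (by simp)]
  rfl

lemma pathAmp_congr {K K' : Fin n → ZMod 2} (c : ZMod 2) {m : ℕ}
    (h : ∀ ℓ : Fin n, ℓ.val < m → K ℓ = K' ℓ) : pathAmp u K c m = pathAmp u K' c m := by
  refine prod_congr rfl fun ℓ hℓ => ?_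
  have hℓm : ℓ.val < m := (mem_filter.1 hℓ).2
  rw [h ℓ hℓm, entryBefore_congr K c fun i hi => h i (hi.trans hℓm)]

lemma fTwo_eq_pathAmp_mul (I K : Fin n → ZMod 2) :
    fTwo n u I K = pathAmp u I (lastBit n K) n * pathAmp u K 0 n := by
  simp [fTwo, pathAmp, prevBitD_eq_entryBefore]

noncomputable def walkPrefix (m : ℕ) :
    Matrix (ZMod 2 × (Fin n → ZMod 2)) (ZMod 2 × (Fin n → ZMod 2)) ℂ :=
  (((List.finRange n).take m).reverse.map fun k => flipC n k * coinR n (u k)).prod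

lemma walkPrefix_zero : walkPrefix u 0 = 1 := rfl

lemma walkPrefix_succ {m : ℕ} (hm : m < n) :
    walkPrefix u (m + 1) = flipC n ⟨m, hm⟩ * coinR n (u ⟨m, hm⟩) * walkPrefix u m := by
  simp [walkPrefix, List.take_add_one, hm]

lemma walkPrefix_self : walkPrefix u n = walkU n u := by
  rw [walkPrefix, walkU, List.take_of_length_le (by simp)]

lemma walkPrefix_apply {m : ℕ} (hm : m ≤ n) (c' c : ZMod 2) (J K : Fin n → ZMod 2) :
    walkPrefix u m (c', J + K) (c, J) =
      if (∀ ℓ : Fin n, m ≤ ℓ.val → K ℓ = 0) ∧ c' = entryBefore K c m then pathAmp u K c m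
      else 0 := by
  induction m generalizing c' K with
  | zero =>
    simp [walkPrefix_zero, Matrix.one_apply, pathAmp_zero, entryBefore, funext_iff, and_comm]
  | succ m ih =>
    have hm' : m < n := hm
    have hagree : ∀ ℓ : Fin n, ℓ.val < m →
        K ℓ = (K + c' • (Pi.single ⟨m, hm'⟩ 1 : Fin n → ZMod 2)) ℓ := by
      intro ℓ hℓ
      simp [Fin.ext_iff, hℓ.ne]
    rw [walkPrefix_succ u hm', mul_assoc, flipC_mul_apply, coinR_mul_apply, add_assoc]
    simp only [ih hm'.le, ite_and, mul_ite, mul_zero, sum_ite_irrel, sum_ite_eq', mem_univ,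
      if_true, sum_const_zero]
    rw [entryBefore_succ K c hm', pathAmp_succ u K c hm']
    simp only [← entryBefore_congr K c hagree, ← pathAmp_congr u c hagree,
      forall_ge_add_smul_single_eq_zero_iff hm', ite_and]
    split_ifs with _ hc
    · rw [hc]
    all_goals rfl

lemma walkU_apply (c' c : ZMod 2) (J' J : Fin n → ZMod 2) :
    walkU n u (c', J') (c, J) =
      if c' = entryBefore (J' + J) c n then pathAmp u (J' + J) c n else 0 := by
  obtain ⟨K, rfl⟩ : ∃ K, J' = J + K :=
    ⟨J' + J, by rw [add_comm J', ← add_assoc, ZModModule.add_self, zero_add]⟩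
  have hvacuous : ∀ ℓ : Fin n, n ≤ ℓ.val → K ℓ = 0 := fun ℓ h => absurd ℓ.isLt (not_lt.2 h)
  rw [← walkPrefix_self, walkPrefix_apply u le_rfl, add_right_comm, ZModModule.add_self, zero_add]
  simp only [and_iff_right hvacuous]

lemma walkU_sq_apply (k : ZMod 2) (J' J : Fin n → ZMod 2) :
    (walkU n u ^ 2) (k, J') (0, J) = ∑ I with lastBit n I = k, fTwo n u I (J' + J + I) := by
  rw [pow_two, Matrix.mul_apply, Fintype.sum_prod_type, sum_comm, sum_filter]
  refine Fintype.sum_equiv (Equiv.addLeft J') _ _ fun M => ?_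
  have hK : J' + J + (J' + M) = M + J := by
    rw [add_add_add_comm, ZModModule.add_self, zero_add, add_comm]
  simp only [Equiv.coe_addLeft, hK, walkU_apply, mul_ite, mul_zero, sum_ite_eq', mem_univ,
    if_true, ← lastBit_eq_entryBefore, entryBefore_lastBit, fTwo_eq_pathAmp_mul, ite_mul,
    zero_mul, eq_comm]

end WalkAmplitudes

theorem stmt_12 (n : ℕ) (u : Fin n → ℝ × ℝ × ℝ) (J' J : Fin n → ZMod 2) :
    ∑ k : ZMod 2, ‖(walkU n u ^ 2) (k, J') (0, J)‖ ^ 2 =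
      ∑ k : ZMod 2,
        ‖∑ I ∈ Finset.univ.filter (fun I : Fin n → ZMod 2 => lastBit n I = k),
            fTwo n u I (J' + J + I)‖ ^ 2 :=
  Finset.sum_congr rfl fun k _ => by rw [walkU_sq_apply]
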